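/- arXiv:2309.00011 — 6 statements merged into one kernel-verified Lean document; each statement's English description precedes it below -/
import Mathlib

section
/- For every natural number n, the number of n-element subsets of Fin 4 × Fin 13 containing a full house equals the sum, over all functions t : Fin 13 → ℕ satisfying t(i) ≤ 4 for every i, ∑ i, t(i) = n, and such that there exist distinct ranks i and j with t(i) ≥ 3 and t(j) ≥ 2, of the product ∏ i, (4 choose t(i)). -/
attribute [local instance] Classical.propDecidable

/-- A hand contains a flush if some suit appears on at least 5 of its cards. -/
def HasFlush (H : Finset (Fin 4 × Fin 13)) : Prop :=
  ∃ s : Fin 4, 5 ≤ (H.filter (fun c => c.1 = s)).card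

/-- A hand contains a full house if some rank appears on ≥3 cards and a different
rank appears on ≥2 cards. -/
def HasFullHouse (H : Finset (Fin 4 × Fin 13)) : Prop :=
  ∃ r s : Fin 13, r ≠ s ∧ 3 ≤ (H.filter (fun c => c.2 = r)).card ∧
    2 ≤ (H.filter (fun c => c.2 = s)).card

/-- A set of ranks contains a run iffive consecutive ranks
starting at some i ≤ 9 all belong to it. -/
def HasRun (R : Finset (Fin 13)) : Prop :=
  ∃ i : ℕ, i ≤ 9 ∧ ∀ j : ℕ, j ≤ 4 →
    (⟨(i + j) % 13, Nat.mod_lt _ (by norm_num)⟩ : Fin 13) ∈ R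

/-- A hand contains a straight if its set of ranks contains a run. -/
def HasStraight (H : Finset (Fin 4 × Fin 13)) : Prop :=
  HasRun (H.image Prod.snd)

/-- Number of n-card hands containing a flush. -/
noncomputable def flushCount (n : ℕ) : ℕ :=
  ((Finset.univ.powersetCard n : Finset (Finset (Fin 4 × Fin 13))).filter HasFlush).card

/-- Number of n-card hands containing a full house. -/
noncomputable def fullHouseCount (n : ℕ) : ℕ :=
  ((Finset.univ.powersetCard n : Finset (Finset (Fin 4 × Fin 13))).filter HasFullHouse).card

/-- Number of n-card hands containing a straight. -/
noncomputable def straightCount (n : ℕ) : ℕ :=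
  ((Finset.univ.powersetCard n : Finset (Finset (Fin 4 × Fin 13))).filter HasStraight).card

/-! A hand is the same thing as a choice, for each rank, of the set of suits it holds in that rank.
Its size and whether it contains a full house depend only on its rank profile `t` (the number of
cards of each rank), and the hands with profile `t` correspond to choosing a `t i`-element set of
suits for every rank `i`, so there are `∏ i, (4 choose t i)` of them. -/

open Finset

section

variable {α ι : Type*} [Fintype α] [Fintype ι]

noncomputable def suitsByRank : Finset (α × ι) ≃ (ι → Finset α) where
  toFun H i := {a | (a, i) ∈ H}
  invFun f := {c | c.1 ∈ f c.2}
  left_inv H := by ext; simp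
  right_inv f := by ext; simp

theorem filter_snd_eq_map_suitsByRank (H : Finset (α × ι)) (i : ι) :
    {c ∈ H | c.2 = i} = (suitsByRank H i).map ⟨(·, i), fun _ _ h => congrArg Prod.fst h⟩ := by
  ext ⟨a, j⟩
  simp only [mem_filter, mem_map, suitsByRank, Equiv.coe_fn_mk, mem_univ, true_and]
  constructor
  · rintro ⟨h, rfl⟩; exact ⟨a, h, rfl⟩
  · rintro ⟨b, h, ⟨⟩⟩; exact ⟨h, rfl⟩

theorem card_filter_snd_eq (H : Finset (α × ι)) (i : ι) :
    #{c ∈ H | c.2 = i} = #(suitsByRank H i) := by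
  rw [filter_snd_eq_map_suitsByRank, card_map]

theorem card_eq_sum_card_suitsByRank (H : Finset (α × ι)) :
    #H = ∑ i, #(suitsByRank H i) := by
  simp only [← card_filter_snd_eq]
  exact card_eq_sum_card_fiberwise fun c _ => mem_univ c.2

theorem card_filter_forall_card_eq (t : ι → ℕ) :
    #{f : ι → Finset α | ∀ i, #(f i) = t i} = ∏ i, (Fintype.card α).choose (t i) := by
  have : ({f : ι → Finset α | ∀ i, #(f i) = t i} : Finset _) =
      Fintype.piFinset fun i => powersetCard (t i) univ := by
    ext f; simp
  rw [this, Fintype.card_piFinset]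
  simp

theorem card_filter_of_card_profile (P : (ι → ℕ) → Prop) [DecidablePred P] :
    #{f : ι → Finset α | P fun i => #(f i)} =
      ∑ t ∈ (Fintype.piFinset fun _ => range (Fintype.card α + 1)) with P t,
        ∏ i, (Fintype.card α).choose (t i) := by
  rw [card_eq_sum_card_fiberwise (f := fun f i => #(f i))
    (t := (Fintype.piFinset fun _ => range (Fintype.card α + 1)).filter P)]
  · refine sum_congr rfl fun t ht => ?_
    rw [← card_filter_forall_card_eq t, filter_filter]
    congr 1
    ext f
    simp only [mem_filter, mem_univ, true_and, ← funext_iff]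
    exact and_iff_right_of_imp fun h => h ▸ (mem_filter.1 ht).2
  · intro f hf
    simp only [coe_filter, mem_univ, true_and, Set.mem_ofPred_eq] at hf
    simp [hf, card_le_univ]

theorem card_filter_powersetCard_of_rank_profile (n : ℕ) (Q : (ι → ℕ) → Prop) [DecidablePred Q] :
    #{H ∈ powersetCard n (univ : Finset (α × ι)) | Q fun i => #{c ∈ H | c.2 = i}} =
      ∑ t ∈ (Fintype.piFinset fun _ => range (Fintype.card α + 1)) with ∑ i, t i = n ∧ Q t,
        ∏ i, (Fintype.card α).choose (t i) := by
  rw [← card_filter_of_card_profile]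
  refine card_equiv suitsByRank fun H => ?_
  simp only [mem_filter, mem_powersetCard_univ, mem_univ, true_and, card_filter_snd_eq]
  rw [card_eq_sum_card_suitsByRank H]

end

theorem fullhouse_count_formula (n : ℕ) :
    fullHouseCount n =
      ∑ t ∈ (Fintype.piFinset (fun _ : Fin 13 => Finset.range 5)).filter
          (fun t => ∑ i, t i = n ∧ ∃ i j : Fin 13, i ≠ j ∧ 3 ≤ t i ∧ 2 ≤ t j),
        ∏ i, Nat.choose 4 (t i) := by
  have h := card_filter_powersetCard_of_rank_profile (α := Fin 4) (ι := Fin 13) n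
    fun t => ∃ i j, i ≠ j ∧ 3 ≤ t i ∧ 2 ≤ t j
  rw [Fintype.card_fin] at h
  unfold fullHouseCount HasFullHouse
  convert h
end

section
/- For every natural number n, the number of n-element subsets of Fin 4 × Fin 13 containing a straight equals the sum, over all functions t : Fin 13 → ℕ satisfying t(i) ≤ 4 for every i, ∑ i, t(i) = n, and such that the set of ranks i with t(i) ≥ 1 contains a run, of the product ∏ i, (4 choose t(i)). -/
attribute [local instance] Classical.propDecidable

/-!
A hand is determined by its columns, the sets of suits it holds in each rank. So the hands
whose rank profile (number of cards of each rank) is `t` correspond to choosing a `t r`-subset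
of the four suits for every rank `r`, and there are `∏ r, (4 choose t r)` of them. Both the size
of a hand and whether it contains a straight depend only on its rank profile, so summing over
the admissible profiles gives the count.
-/

open Finset Fintype

noncomputable section

variable {S R : Type*} [Fintype S]

def column (H : Finset (S × R)) (r : R) : Finset S := {s | (s, r) ∈ H}

@[simp] lemma mem_column {H : Finset (S × R)} {r : R} {s : S} :
    s ∈ column H r ↔ (s, r) ∈ H := by
  simp [column]

def rankCount (H : Finset (S × R)) (r : R) : ℕ := #(column H r)

lemma rankCount_le_card (H : Finset (S × R)) (r : R) : rankCount H r ≤ card S :=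
  card_le_univ _

variable [Fintype R]

def columnsEquiv : Finset (S × R) ≃ (R → Finset S) where
  toFun := column
  invFun f := {c | c.1 ∈ f c.2}
  left_inv H := by ext; simp
  right_inv f := by ext; simp

lemma image_snd_eq_filter_rankCount_pos [DecidableEq R] (H : Finset (S × R)) :
    H.image Prod.snd = ({r | 1 ≤ rankCount H r} : Finset R) := by
  ext r
  simp [rankCount, Nat.one_le_iff_ne_zero, eq_empty_iff_forall_notMem]

lemma sum_rankCount (H : Finset (S × R)) : ∑ r, rankCount H r = #H := by
  rw [card_eq_sum_card_fiberwise fun c _ => mem_univ c.2]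
  refine sum_congr rfl fun r _ => ?_
  rw [rankCount, ← card_image_of_injective _ (Prod.mk_left_injective r)]
  congr 1
  ext ⟨s, r'⟩
  simp only [mem_filter, mem_image, mem_column, Prod.mk.injEq]
  constructor
  · rintro ⟨s, h, rfl, rfl⟩
    exact ⟨h, rfl⟩
  · rintro ⟨h, rfl⟩
    exact ⟨s, h, rfl, rfl⟩

lemma card_filter_rankCount_eq (t : R → ℕ) :
    #{H : Finset (S × R) | rankCount H = t} = ∏ r, (card S).choose (t r) := by
  rw [card_equiv columnsEquiv (t := piFinset fun r => powersetCard (t r) univ)]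
  · simp
  · intro H
    simp [funext_iff, rankCount, columnsEquiv]

theorem card_filter_rankCount (P : (R → ℕ) → Prop) [DecidablePred P] :
    #{H : Finset (S × R) | P (rankCount H)} =
      ∑ t ∈ (piFinset fun _ => range (card S + 1)).filter P, ∏ r, (card S).choose (t r) := by
  rw [card_eq_sum_card_fiberwise (f := rankCount) fun H hH => ?_]
  · refine sum_congr rfl fun t ht => ?_
    rw [← card_filter_rankCount_eq, filter_filter]
    refine congrArg card (filter_congr fun H _ => ?_)
    exact ⟨And.right, fun h => ⟨h ▸ (mem_filter.1 ht).2, h⟩⟩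
  · refine mem_filter.2 ⟨mem_piFinset.2 fun r => ?_, (mem_filter.1 hH).2⟩
    exact mem_range.2 (Nat.lt_succ_of_le (rankCount_le_card H r))

end

theorem straight_count_formula (n : ℕ) :
    straightCount n =
      ∑ t ∈ (Fintype.piFinset (fun _ : Fin 13 => Finset.range 5)).filter
          (fun t => ∑ i, t i = n ∧ HasRun (Finset.univ.filter (fun i => 1 ≤ t i))),
        ∏ i, Nat.choose 4 (t i) := by
  have straightHands : (univ.powersetCard n).filter HasStraight =
      ({H | ∑ i, rankCount H i = n ∧ HasRun {i | 1 ≤ rankCount H i}} :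
        Finset (Finset (Fin 4 × Fin 13))) := by
    ext H
    rw [mem_filter, mem_filter, mem_powersetCard_univ, HasStraight, sum_rankCount,
      image_snd_eq_filter_rankCount_pos]
    exact ⟨fun h => ⟨mem_univ H, h⟩, And.right⟩
  rw [straightCount, straightHands]
  convert card_filter_rankCount fun t => ∑ i, t i = n ∧ HasRun {i | 1 ≤ t i} <;> simp
end

section
/- Every subset of Fin 4 × Fin 13 with at least 27 elements contains a full house; that is, for every hand with at least 27 cards there exist two distinct ranks r and s such that at least 3 cards of the hand have rank r and at least 2 cards have rank s. -/
attribute [local instance] Classical.propDecidable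

theorem fullhouse_of_twentyseven (H : Finset (Fin 4 × Fin 13)) (h : 27 ≤ H.card) :
    HasFullHouse H := by
  classical
  set f : Fin 13 → ℕ := fun r => (H.filter (fun c => c.2 = r)).card with hf
  have hsum : H.card = ∑ r : Fin 13, f r := by
    apply Finset.card_eq_sum_card_fiberwise
    intro x _; exact Finset.mem_univ _
  have hle4 : ∀ r, f r ≤ 4 := by
    intro r
    calc f r ≤ ((Finset.univ : Finset (Fin 4 × Fin 13)).filter (fun c => c.2 = r)).card :=
          Finset.card_le_card (Finset.filter_subset_filter _ (Finset.subset_univ H))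
      _ = 4 := by
          have : (Finset.univ.filter (fun c : Fin 4 × Fin 13 => c.2 = r)) = Finset.univ ×ˢ {r} := by
            ext ⟨a, b⟩; simp [eq_comm]
          rw [this, Finset.card_product]; simp
  -- find r with 3 ≤ f r
  have hr : ∃ r, 3 ≤ f r := by
    by_contra hc
    push_neg at hc
    have : ∑ r : Fin 13, f r ≤ ∑ _r : Fin 13, 2 := by
      apply Finset.sum_le_sum
      intro i _; have := hc i; omega
    simp at this
    omega
  obtain ⟨r, hr3⟩ := hr
  have hs : ∃ s, s ≠ r ∧ 2 ≤ f s := by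
    by_contra hc
    push_neg at hc
    have hsplit : ∑ x ∈ Finset.univ.erase r, f x + f r = ∑ r : Fin 13, f r :=
      Finset.sum_erase_add _ _ (Finset.mem_univ r)
    have : ∑ x ∈ Finset.univ.erase r, f x ≤ ∑ _x ∈ Finset.univ.erase r, 1 := by
      apply Finset.sum_le_sum
      intro i hi
      have := hc i (Finset.ne_of_mem_erase hi)
      omega
    simp [Finset.card_erase_of_mem] at this
    have h4 := hle4 r
    omega
  obtain ⟨s, hsr, hs2⟩ := hs
  exact ⟨r, s, hsr.symm, hr3, hs2⟩
end

section
/- An 11-element subset R of Fin 13 fails to contain a run if and only if R is exactly the complement of {4, 9} in Fin 13 (i.e., the two missing ranks are the rank Five and the rank Ten). -/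
attribute [local instance] Classical.propDecidable

def HasRunB (R : Finset (Fin 13)) : Prop :=
  ∃ i : Fin 10, ∀ j : Fin 5,
    (⟨((i : ℕ) + (j : ℕ)) % 13, Nat.mod_lt _ (by norm_num)⟩ : Fin 13) ∈ R

lemma hasRun_iff (R : Finset (Fin 13)) : HasRun R ↔ HasRunB R := by
  constructor
  · rintro ⟨i, hi, hj⟩
    exact ⟨⟨i, by omega⟩, fun j => hj j (by omega)⟩
  · rintro ⟨i, hj⟩
    exact ⟨i, by omega, fun j hj4 => hj ⟨j, by omega⟩⟩

set_option maxRecDepth 100000 in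
lemma key : ∀ a b : Fin 13, a ≠ b →
    ((¬ ∃ i : Fin 10, ∀ j : Fin 5,
      (⟨((i : ℕ) + (j : ℕ)) % 13, Nat.mod_lt _ (by norm_num)⟩ : Fin 13) ≠ a ∧
      (⟨((i : ℕ) + (j : ℕ)) % 13, Nat.mod_lt _ (by norm_num)⟩ : Fin 13) ≠ b) ↔
      ((a = 4 ∧ b = 9) ∨ (a = 9 ∧ b = 4))) := by decide

theorem eleven_ranks_no_run_iff (R : Finset (Fin 13)) (h : R.card = 11) :
    ¬ HasRun R ↔ R = ({4, 9} : Finset (Fin 13))ᶜ := by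
  classical
  have hc : Rᶜ.card = 2 := by
    have := Finset.card_compl R
    simp [h, Fintype.card_fin] at this
    omega
  obtain ⟨a, b, hab, hR⟩ := Finset.card_eq_two.mp hc
  have hmem : ∀ x : Fin 13, x ∈ R ↔ x ≠ a ∧ x ≠ b := by
    intro x
    have : x ∈ R ↔ x ∉ Rᶜ := by simp
    rw [this, hR]
    simp [not_or]
  rw [hasRun_iff]
  have h1 : HasRunB R ↔ ∃ i : Fin 10, ∀ j : Fin 5,
      (⟨((i : ℕ) + (j : ℕ)) % 13, Nat.mod_lt _ (by norm_num)⟩ : Fin 13) ≠ a ∧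
      (⟨((i : ℕ) + (j : ℕ)) % 13, Nat.mod_lt _ (by norm_num)⟩ : Fin 13) ≠ b := by
    unfold HasRunB
    exact exists_congr fun i => forall_congr' fun j => hmem _
  have h2 : R = ({4, 9} : Finset (Fin 13))ᶜ ↔ ((a = 4 ∧ b = 9) ∨ (a = 9 ∧ b = 4)) := by
    rw [← compl_inj_iff, compl_compl, hR]
    constructor
    · intro hset
      have ha : a ∈ ({4, 9} : Finset (Fin 13)) := by rw [← hset]; simp
      have hb : b ∈ ({4, 9} : Finset (Fin 13)) := by rw [← hset]; simp
      simp only [Finset.mem_insert, Finset.mem_singleton] at ha hb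
      rcases ha with ha | ha <;> rcases hb with hb | hb <;>
        first
        | (exfalso; exact hab (ha.trans hb.symm))
        | tauto
    · rintro (⟨ha, hb⟩ | ⟨ha, hb⟩) <;> subst ha <;> subst hb
      · rfl
      · ext x; simp [or_comm]
  rw [h1, h2]
  exact key a b hab
end

section
/- Every subset of Fin 4 × Fin 13 with at least 45 elements contains a straight. -/
attribute [local instance] Classical.propDecidable

theorem straight_of_fortyfive (H : Finset (Fin 4 × Fin 13)) (h : 45 ≤ H.card) :
    HasStraight H := by
  classical
  set R : Finset (Fin 13) := H.image Prod.snd with hR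
  -- H is contained in univ ×ˢ R
  have hsub : H ⊆ Finset.univ ×ˢ R := by
    intro c hc
    simp only [Finset.mem_product, Finset.mem_univ, true_and, hR]
    exact Finset.mem_image_of_mem Prod.snd hc
  have hcard : H.card ≤ 4 * R.card := by
    have := Finset.card_le_card hsub
    simpa [Finset.card_product, Fintype.card_fin] using this
  have hR12 : 12 ≤ R.card := by omega
  -- any set of ≥ 12 ranks contains a run
  show HasRun R
  by_cases hall : R = Finset.univ
  · refine ⟨0, by norm_num, fun j hj => ?_⟩
    simp [hall]
  · obtain ⟨m, hm⟩ : ∃ m : Fin 13, m ∉ R := by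
      by_contra hc
      push_neg at hc
      exact hall (Finset.eq_univ_iff_forall.mpr hc)
    have hmem : ∀ x : Fin 13, x ≠ m → x ∈ R := by
      intro x hx
      by_contra hxR
      have hsub2 : ({x, m} : Finset (Fin 13)) ⊆ Rᶜ := by
        intro y hy
        simp only [Finset.mem_insert, Finset.mem_singleton] at hy
        rcases hy with rfl | rfl <;> simpa [Finset.mem_compl]
      have h2 : ({x, m} : Finset (Fin 13)).card = 2 := by
        rw [Finset.card_insert_of_notMem (by simpa using hx), Finset.card_singleton]
      have hle := Finset.card_le_card hsub2
      rw [Finset.card_compl, Fintype.card_fin, h2] at hle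
      omega
    by_cases hm4 : m.val ≤ 4
    · refine ⟨5, by norm_num, fun j hj => ?_⟩
      apply hmem
      intro heq
      have : (5 + j) % 13 = m.val := congrArg Fin.val heq
      omega
    · refine ⟨0, by norm_num, fun j hj => ?_⟩
      apply hmem
      intro heq
      have : (0 + j) % 13 = m.val := congrArg Fin.val heq
      omega
end

section
/- Among the 13-element subsets of Fin 4 × Fin 13 (the hands dealt in four-player Big Two): the number containing a straight equals 355161047872, the number containing a flush equals 412247470340, and the number containing a full house equals 307061893424; in particular the flush count exceeds the straight count, which exceeds the full house count. -/
attribute [local instance] Classical.propDecidable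

/-!
Each of the three properties depends only on how many cards of the hand lie in each suit (flush)
or in each rank (full house, straight). A hand whose fibres have sizes `v` is a choice of a
`v i`-subset of every fibre, so the number of `n`-card hands with the property is the sum of
`∏ i, (N choose v i)` over the tuples `v` with sum `n` that have it. Such a sum is computed by a
dynamic program that reads `v` one coordinate at a time, tracking the total still to be reached
and the state of a small automaton recognising the property; the memoised program is then
evaluated by the kernel. The automata for flushes and full houses are verified by an invariant,
the one for straights by running it on all `2 ^ 13` sets of ranks.
-/

open Finset Finset.Nat

theorem Finset.Nat.sum_antidiagonalTuple_succ {M : Type*} [AddCommMonoid M] (k t : ℕ)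
    (g : (Fin (k + 1) → ℕ) → M) :
    ∑ v ∈ antidiagonalTuple (k + 1) t, g v =
      ∑ x ∈ range (t + 1), ∑ u ∈ antidiagonalTuple k (t - x), g (Fin.cons x u) := by
  simp only [Finset.sum, antidiagonalTuple, Multiset.Nat.antidiagonalTuple, Multiset.map_coe,
    Multiset.sum_coe, List.Nat.antidiagonalTuple, List.Nat.antidiagonal, List.map_flatten,
    range_val, Multiset.range, List.flatMap, List.sum_flatten, List.map_map, Function.comp_def]

section FiberCards

variable {γ ι : Type*} [DecidableEq ι]

def fiberCards (f : γ → ι) (H : Finset γ) (i : ι) : ℕ := #{c ∈ H | f c = i}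

theorem sum_fiberCards [Fintype ι] (f : γ → ι) (H : Finset γ) : ∑ i, fiberCards f H i = #H :=
  (card_eq_sum_card_fiberwise fun c _ => mem_univ (f c)).symm

theorem filter_eq_of_subset_fibers [Fintype γ] [DecidableEq γ] (f : γ → ι) {g : ι → Finset γ}
    (hg : ∀ i, g i ⊆ ({c | f c = i} : Finset γ)) (i : ι) :
    ({c | c ∈ g (f c)} : Finset γ).filter (f · = i) = g i := by
  ext c
  simp only [mem_filter, mem_univ, true_and]
  constructor
  · rintro ⟨hc, rfl⟩
    exact hc
  · intro hc
    obtain rfl : f c = i := by simpa using hg i hc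
    exact ⟨hc, rfl⟩

theorem card_filter_fiberCards_eq_prod [Fintype γ] [DecidableEq γ] [Fintype ι] (f : γ → ι)
    (v : ι → ℕ) :
    #{H : Finset γ | fiberCards f H = v} = ∏ i, (#{c | f c = i}).choose (v i) := by
  set S := Fintype.piFinset fun i => powersetCard (v i) ({c | f c = i} : Finset γ)
  have hS : ∀ g ∈ S, ∀ i, g i ⊆ ({c | f c = i} : Finset γ) ∧ #(g i) = v i := fun g hg i =>
    mem_powersetCard.1 (Fintype.mem_piFinset.1 hg i)
  calc #{H : Finset γ | fiberCards f H = v}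
      = #S := by
        refine card_nbij' (fun H i => {c ∈ H | f c = i}) (fun g => ({c | c ∈ g (f c)} : Finset γ))
          ?_ ?_ ?_ ?_
        · intro H hH
          simp only [coe_filter, mem_univ, true_and, Set.mem_ofPred_eq] at hH
          simp only [S, mem_coe, Fintype.mem_piFinset, mem_powersetCard]
          exact fun i => ⟨fun c hc => by simpa using (mem_filter.1 hc).2, congrFun hH i⟩
        · intro g hg
          simp only [coe_filter, mem_univ, true_and, Set.mem_ofPred_eq]
          funext i
          rw [fiberCards, filter_eq_of_subset_fibers f (fun i => (hS g hg i).1)]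
          exact (hS g hg i).2
        · intro H _
          ext c
          simp
        · intro g hg
          exact funext (filter_eq_of_subset_fibers f fun i => (hS g hg i).1)
    _ = ∏ i, (#{c | f c = i}).choose (v i) := by
        simp only [S, Fintype.card_piFinset, card_powersetCard]

theorem card_filter_powersetCard_eq_sum [Fintype γ] [DecidableEq γ] {k N : ℕ} (f : γ → Fin k)
    (hf : ∀ i, #{c | f c = i} = N) (n : ℕ) (V : (Fin k → ℕ) → Prop) [DecidablePred V] :
    #{H ∈ powersetCard n univ | V (fiberCards f H)} =
      ∑ v ∈ antidiagonalTuple k n with V v, ∏ i, N.choose (v i) := by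
  rw [card_eq_sum_card_fiberwise (f := fiberCards f) (t := {v ∈ antidiagonalTuple k n | V v})]
  · refine sum_congr rfl fun v hv => ?_
    obtain ⟨hsum, hV⟩ := mem_filter.1 hv
    rw [mem_antidiagonalTuple] at hsum
    rw [show ∏ i, N.choose (v i) = ∏ i, (#{c | f c = i}).choose (v i) by simp only [hf],
      ← card_filter_fiberCards_eq_prod f v]
    congr 1
    ext H
    simp only [mem_filter, mem_powersetCard_univ, mem_univ, true_and, and_iff_right_iff_imp]
    rintro rfl
    exact ⟨(sum_fiberCards f H).symm.trans hsum, hV⟩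
  · intro H hH
    simp only [coe_filter, mem_powersetCard_univ, Set.mem_ofPred_eq] at hH ⊢
    exact ⟨by rw [mem_antidiagonalTuple, sum_fiberCards, hH.1], hH.2⟩

end FiberCards

section WeightedCount

variable {Q : Type*} (δ : Q → ℕ → Q) (w : ℕ → ℕ) (acc : Q → Bool)

def weightedCountStep (F : ℕ → Q → ℕ) (t : ℕ) (q : Q) : ℕ :=
  ∑ x ∈ range (t + 1), w x * F (t - x) (δ q x)

def weightedCount : ℕ → ℕ → Q → ℕ
  | 0, 0, q => (acc q).toNat
  | 0, _ + 1, _ => 0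
  | k + 1, t, q => weightedCountStep δ w (weightedCount k) t q

theorem weightedCount_eq (k t : ℕ) (q : Q) :
    weightedCount δ w acc k t q =
      ∑ v ∈ antidiagonalTuple k t with acc ((List.ofFn v).foldl δ q), ∏ i, w (v i) := by
  induction k generalizing t q with
  | zero =>
    cases t <;> cases h : acc q <;> simp [weightedCount, h]
  | succ k ih =>
    rw [sum_filter, sum_antidiagonalTuple_succ, weightedCount, weightedCountStep]
    refine sum_congr rfl fun x _ => ?_
    simp [ih, sum_filter, mul_sum, Fin.prod_univ_succ, List.ofFn_succ]

theorem card_filter_powersetCard_eq_weightedCount {γ : Type*} [Fintype γ] [DecidableEq γ]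
    {k N : ℕ} (f : γ → Fin k) (hf : ∀ i, #{c | f c = i} = N) (n : ℕ) {P : Finset γ → Prop}
    [DecidablePred P] (q₀ : Q)
    (hP : ∀ H, P H ↔ acc ((List.ofFn (fiberCards f H)).foldl δ q₀)) :
    #{H ∈ powersetCard n univ | P H} = weightedCount δ N.choose acc k n q₀ := by
  rw [filter_congr fun H _ => hP H,
    card_filter_powersetCard_eq_sum f hf n fun v => acc ((List.ofFn v).foldl δ q₀),
    weightedCount_eq]

variable [BEq Q] (states : List Q) (n : ℕ)

def tabulate (F : ℕ → Q → ℕ) : List (List (Q × ℕ)) :=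
  (List.range (n + 1)).map fun t => states.map fun q => (q, F t q)

def readTable (T : List (List (Q × ℕ))) (t : ℕ) (q : Q) : ℕ :=
  ((T.getD t []).lookup q).getD 0

/-- `weightedCount` with each level stored as a table, so that the kernel evaluates it in time
polynomial in `k` and `n` rather than proportional to the number of words. -/
def weightedCountTable : ℕ → List (List (Q × ℕ))
  | 0 => tabulate states n (weightedCount δ w acc 0)
  | k + 1 => tabulate states n (weightedCountStep δ w (readTable (weightedCountTable k)))

variable [LawfulBEq Q]

theorem readTable_tabulate {F : ℕ → Q → ℕ} {t : ℕ} (ht : t ≤ n) {q : Q} (hq : q ∈ states) :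
    readTable (tabulate states n F) t q = F t q := by
  rw [readTable, tabulate, List.getD_eq_getElem?_getD, List.getElem?_map,
    List.getElem?_range (by omega), Option.map_some, Option.getD_some, List.lookup_graph _ hq,
    Option.getD_some]

theorem readTable_weightedCountTable (hstates : ∀ q, q ∈ states) (k : ℕ) {t : ℕ} (ht : t ≤ n)
    (q : Q) :
    readTable (weightedCountTable δ w acc states n k) t q = weightedCount δ w acc k t q := by
  induction k generalizing t q with
  | zero => exact readTable_tabulate states n ht (hstates q)
  | succ k ih =>
    rw [weightedCountTable, readTable_tabulate states n ht (hstates q), weightedCount]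
    exact sum_congr rfl fun x _ => by rw [ih (by omega)]

end WeightedCount

theorem List.foldl_ofFn_eq_of_snoc {X Q : Type*} (δ : Q → X → Q)
    (α : ∀ {k : ℕ}, (Fin k → X) → Q)
    (hα : ∀ {k} (v : Fin (k + 1) → X), α v = δ (α (Fin.init v)) (v (Fin.last k))) {k : ℕ}
    (v : Fin k → X) : (List.ofFn v).foldl δ (α ![]) = α v := by
  induction k with
  | zero => rw [List.ofFn_zero, List.foldl_nil, Subsingleton.elim v ![]]
  | succ k ih => rw [List.ofFn_succ_last, List.foldl_concat, hα]; exact congrArg (δ · _) (ih _)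

def flushStep (b : Bool) (x : ℕ) : Bool := b || decide (5 ≤ x)

theorem foldl_flushStep {k : ℕ} (v : Fin k → ℕ) :
    (List.ofFn v).foldl flushStep false = decide (∃ s, 5 ≤ v s) :=
  List.foldl_ofFn_eq_of_snoc flushStep (fun v => decide (∃ s, 5 ≤ v s))
    (fun v => by
      rw [Bool.eq_iff_iff]
      simp only [flushStep, Bool.or_eq_true, decide_eq_true_eq]
      simp [Fin.exists_fin_succ', Fin.init]) v

def fullHouseStep : Bool × Bool × Bool → ℕ → Bool × Bool × Bool
  | (three, pair, full), x => (three || decide (3 ≤ x), pair || decide (2 ≤ x),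
      full || (three && decide (2 ≤ x)) || (pair && decide (3 ≤ x)))

theorem foldl_fullHouseStep {k : ℕ} (v : Fin k → ℕ) :
    (List.ofFn v).foldl fullHouseStep (false, false, false) =
      (decide (∃ r, 3 ≤ v r), decide (∃ r, 2 ≤ v r), decide (∃ r s, r ≠ s ∧ 3 ≤ v r ∧ 2 ≤ v s)) :=
  List.foldl_ofFn_eq_of_snoc fullHouseStep
    (fun v => (decide (∃ r, 3 ≤ v r), decide (∃ r, 2 ≤ v r),
      decide (∃ r s, r ≠ s ∧ 3 ≤ v r ∧ 2 ≤ v s)))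
    (fun v => by
      refine Prod.ext ?_ (Prod.ext ?_ ?_) <;> rw [Bool.eq_iff_iff] <;>
        simp only [fullHouseStep, Bool.or_eq_true, Bool.and_eq_true, decide_eq_true_eq]
      all_goals simp [Fin.exists_fin_succ', Fin.init, (Fin.castSucc_ne_last _).symm, exists_or,
        exists_and_right, or_assoc]
      grind) v

/-- After the first rank the state records whether the Ace is present and the length of the
current run of present ranks, `5` meaning that a run has been completed. A present Ace also
completes a final run of four: that is the wrap-around straight Ten–Ace. -/
def straightStep : Option (Bool × Fin 6) → Bool → Option (Bool × Fin 6)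
  | none, b => some (b, if b then 1 else 0)
  | some (ace, r), b => some (ace, if r = 5 then 5 else if b then r + 1 else 0)

def straightAccept : Option (Bool × Fin 6) → Bool
  | none => false
  | some (ace, r) => r == 5 || (ace && r == 4)

def boolWords : ℕ → List (List Bool)
  | 0 => [[]]
  | n + 1 => (boolWords n).flatMap fun l => [false :: l, true :: l]

theorem mem_boolWords_length : ∀ l : List Bool, l ∈ boolWords l.length
  | [] => List.mem_singleton_self _
  | b :: l => List.mem_flatMap.2 ⟨l, mem_boolWords_length l, by cases b <;> simp⟩

set_option maxRecDepth 100000 in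
theorem straightAccept_foldl_boolWords : ∀ l ∈ boolWords 13,
    straightAccept (l.foldl straightStep none) =
      (List.range 10).any fun i => (List.range 5).all fun j => l.getD ((i + j) % 13) false := by
  decide +kernel

theorem straightAccept_foldl_iff (b : Fin 13 → Bool) :
    straightAccept ((List.ofFn b).foldl straightStep none) = true ↔ HasRun {r | b r} := by
  have hb : List.ofFn b ∈ boolWords 13 := by
    simpa only [List.length_ofFn] using mem_boolWords_length (List.ofFn b)
  rw [straightAccept_foldl_boolWords _ hb]
  simp only [HasRun, List.any_eq_true, List.all_eq_true, List.mem_range, Nat.lt_succ_iff,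
    List.getD_eq_getElem?_getD, List.getElem?_ofFn, mem_filter, mem_univ, true_and,
    Nat.mod_lt _ (show 0 < 13 by norm_num), dite_true, Option.getD_some]

theorem hasFlush_iff (H : Finset (Fin 4 × Fin 13)) :
    HasFlush H ↔ ∃ s, 5 ≤ fiberCards Prod.fst H s :=
  Iff.rfl

theorem hasFullHouse_iff (H : Finset (Fin 4 × Fin 13)) :
    HasFullHouse H ↔
      ∃ r s, r ≠ s ∧ 3 ≤ fiberCards Prod.snd H r ∧ 2 ≤ fiberCards Prod.snd H s :=
  Iff.rfl

theorem hasStraight_iff (H : Finset (Fin 4 × Fin 13)) :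
    HasStraight H ↔ HasRun {r | 0 < fiberCards Prod.snd H r} := by
  rw [HasStraight]
  congr!
  ext r
  simp [fiberCards, card_pos, filter_nonempty_iff]

theorem flushCount_eq : flushCount 13 = 412247470340 := by
  rw [flushCount, card_filter_powersetCard_eq_weightedCount flushStep id Prod.fst (N := 13)
    (by decide) 13 false
    (fun H => by rw [hasFlush_iff, foldl_flushStep, id_eq, decide_eq_true_iff]),
    ← readTable_weightedCountTable flushStep _ id [false, true] 13 (by decide) 4 le_rfl]
  decide +kernel

theorem fullHouseCount_eq : fullHouseCount 13 = 307061893424 := by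
  rw [fullHouseCount, card_filter_powersetCard_eq_weightedCount fullHouseStep (·.2.2) Prod.snd
    (N := 4) (by decide) 13 (false, false, false)
    (fun H => by rw [hasFullHouse_iff, foldl_fullHouseStep, decide_eq_true_iff]),
    ← readTable_weightedCountTable fullHouseStep _ _
      ([false, true] ×ˢ ([false, true] ×ˢ [false, true])) 13 (by decide) 13 le_rfl]
  decide +kernel

theorem straightCount_eq : straightCount 13 = 355161047872 := by
  rw [straightCount, card_filter_powersetCard_eq_weightedCount
    (fun q x => straightStep q (decide (0 < x))) straightAccept Prod.snd (N := 4) (by decide) 13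
    none
    (fun H => by
      rw [hasStraight_iff, ← List.foldl_map, List.map_ofFn, straightAccept_foldl_iff]
      simp),
    ← readTable_weightedCountTable _ _ straightAccept
      (none :: ([false, true] ×ˢ List.finRange 6).map some) 13 (by decide) 13 le_rfl]
  decide +kernel

theorem bigtwo_thirteen_card_counts :
    straightCount 13 = 355161047872 ∧
    flushCount 13 = 412247470340 ∧
    fullHouseCount 13 = 307061893424 ∧
    straightCount 13 < flushCount 13 ∧
    fullHouseCount 13 < straightCount 13 := by
  rw [straightCount_eq, flushCount_eq, fullHouseCount_eq]
  norm_num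
end
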